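/- arXiv:1111.5897 — 7 statements merged into one kernel-verified Lean document; each statement's English description precedes it below -/
import Mathlib

section
/- Let A be a bounded self-adjoint positive semidefinite operator on a Hilbert space H, let φ ∈ H and a > 0 satisfy ‖φ‖ ≤ a‖Aφ‖. Then for every k of the form k = 2^l with l ∈ ℕ, ‖φ‖ ≤ a^k‖A^k φ‖. -/
/-! The key inequality is `‖T x‖² = ⟪x, T² x⟫ ≤ ‖x‖ ‖T² x‖` for symmetric `T`. Squaring
`‖x‖ ≤ c ‖T x‖` and inserting it gives `‖x‖ ≤ c² ‖T² x‖`, so the hypothesis passes from `T` with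
constant `c` to `T²` with constant `c²`; iterating this `l` times reaches `T ^ 2 ^ l`. -/

open scoped InnerProductSpace

namespace LinearMap.IsSymmetric

variable {𝕜 E : Type*} [RCLike 𝕜] [SeminormedAddCommGroup E] [InnerProductSpace 𝕜 E]
  {T : E →ₗ[𝕜] E}

theorem norm_apply_sq_le (hT : T.IsSymmetric) (x : E) : ‖T x‖ ^ 2 ≤ ‖x‖ * ‖T (T x)‖ :=
  calc ‖T x‖ ^ 2
    _ = RCLike.re ⟪x, T (T x)⟫_𝕜 := by rw [← inner_self_eq_norm_sq (𝕜 := 𝕜), hT]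
    _ ≤ ‖⟪x, T (T x)⟫_𝕜‖ := RCLike.re_le_norm _
    _ ≤ ‖x‖ * ‖T (T x)‖ := norm_inner_le_norm _ _

theorem norm_le_sq_mul_norm_apply_apply (hT : T.IsSymmetric) {x : E} {c : ℝ}
    (h : ‖x‖ ≤ c * ‖T x‖) : ‖x‖ ≤ c ^ 2 * ‖T (T x)‖ := by
  rcases (norm_nonneg x).eq_or_lt with hx | hx
  · rw [← hx]
    positivity
  have : ‖x‖ * ‖x‖ ≤ ‖x‖ * (c ^ 2 * ‖T (T x)‖) :=
    calc ‖x‖ * ‖x‖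
      _ = ‖x‖ ^ 2 := (sq _).symm
      _ ≤ (c * ‖T x‖) ^ 2 := pow_le_pow_left₀ (norm_nonneg x) h 2
      _ = c ^ 2 * ‖T x‖ ^ 2 := mul_pow _ _ _
      _ ≤ c ^ 2 * (‖x‖ * ‖T (T x)‖) := by gcongr; exact hT.norm_apply_sq_le x
      _ = ‖x‖ * (c ^ 2 * ‖T (T x)‖) := by ring
  exact le_of_mul_le_mul_left this hx

theorem norm_le_pow_two_pow_mul_norm_pow_two_pow_apply (hT : T.IsSymmetric) {x : E} {c : ℝ}
    (h : ‖x‖ ≤ c * ‖T x‖) (l : ℕ) : ‖x‖ ≤ c ^ 2 ^ l * ‖(T ^ 2 ^ l) x‖ := by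
  induction l with
  | zero => simpa using h
  | succ l ih =>
    have hpow : T ^ 2 ^ (l + 1) = T ^ 2 ^ l * T ^ 2 ^ l := by rw [pow_succ, pow_mul, sq]
    rw [hpow, pow_succ, pow_mul]
    exact (hT.pow _).norm_le_sq_mul_norm_apply_apply ih

end LinearMap.IsSymmetric

theorem stmt_1_general {H : Type*} [NormedAddCommGroup H] [InnerProductSpace ℂ H]
    (A : H →L[ℂ] H) (hA : A.IsPositive) (φ : H) (a : ℝ)
    (h : ‖φ‖ ≤ a * ‖A φ‖) :
    ∀ l : ℕ, ‖φ‖ ≤ a ^ (2 ^ l) * ‖(A ^ (2 ^ l)) φ‖ := fun l => by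
  simpa only [← ContinuousLinearMap.toLinearMap_pow, ContinuousLinearMap.coe_coe] using
    hA.isSymmetric.norm_le_pow_two_pow_mul_norm_pow_two_pow_apply h l

/-- If `A` is a bounded self-adjoint positive semidefinite operator on a
complex Hilbert space `H`, `φ ∈ H`, `a > 0` and `‖φ‖ ≤ a‖Aφ‖`, then for every `k = 2^l`,
`‖φ‖ ≤ a^k‖A^k φ‖`. -/
theorem stmt_1 {H : Type*} [NormedAddCommGroup H] [InnerProductSpace ℂ H] [CompleteSpace H]
    (A : H →L[ℂ] H) (hA : A.IsPositive) (φ : H) (a : ℝ) (ha : 0 < a)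
    (h : ‖φ‖ ≤ a * ‖A φ‖) :
    ∀ l : ℕ, ‖φ‖ ≤ a ^ (2 ^ l) * ‖(A ^ (2 ^ l)) φ‖ :=
  stmt_1_general A hA φ a h
end

section
/- Let A be a bounded self-adjoint positive semidefinite operator on a Hilbert space H and ω ≥ 0. If f ∈ H satisfies ‖A^k f‖ ≤ ω^k‖f‖ for all k ∈ ℕ, then the spectral projection of A onto the interval (ω, ∞) applied to f is zero, i.e. f lies in the range of the spectral projection onto [0, ω]. -/
/-!
Write `g(A) = cfc g A` for a continuous `g` vanishing on `(-∞, ω]`. Given `ε > 0`, continuity of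
`g` at `ω` gives `b > ω` with `g² < ε` on `[ω, b)`, and on the rest of the spectrum
`g² ≤ M (x / b)^(2k)`; hence `g² ≤ ε + d x^(2k)` on the spectrum with `d ω^(2k) = M (ω / b)^(2k)`,
which is small for large `k`. Monotonicity of the functional calculus turns this into
`‖g(A) f‖² ≤ ε ‖f‖² + d ‖A^k f‖² ≤ ε ‖f‖² + d ω^(2k) ‖f‖²`, so `g(A) f = 0`.
-/

/-- The range of the spectral projection of a (positive self-adjoint) operator `A`
onto `[0, ω]` (equivalently, `(-∞, ω]`): the set of vectors annihilated by `g(A)`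
for every continuous function `g` vanishing on `(-∞, ω]`, i.e. the vectors on which
the spectral projection onto `(ω, ∞)` vanishes. -/
def specSubspace {H : Type*} [NormedAddCommGroup H] [InnerProductSpace ℂ H] [CompleteSpace H]
    (A : H →L[ℂ] H) (ω : ℝ) : Set H :=
  {f | ∀ g : ℝ → ℝ, Continuous g → (∀ x ≤ ω, g x = 0) → cfc g A f = 0}

open RCLike ContinuousLinearMap Filter Topology Set
open scoped InnerProductSpace

lemma exists_sq_le_add_mul_pow {g : ℝ → ℝ} (hg : Continuous g) {ω : ℝ} (hω : 0 ≤ ω)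
    (hg0 : ∀ x ≤ ω, g x = 0) (R : ℝ) {ε : ℝ} (hε : 0 < ε) :
    ∃ (k : ℕ) (d : ℝ), 0 ≤ d ∧ d * ω ^ (2 * k) ≤ ε ∧ ∀ x ≤ R, g x ^ 2 ≤ ε + d * x ^ (2 * k) := by
  have hnear : {x | g x ^ 2 < ε} ∈ 𝓝 ω :=
    (hg.pow 2).continuousAt.eventually_lt continuousAt_const (by simpa [hg0 ω le_rfl] using hε)
  obtain ⟨b, hωb, hb⟩ := exists_Ico_subset_of_mem_nhds hnear ⟨ω + 1, by linarith⟩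
  have hb0 : 0 < b := hω.trans_lt hωb
  obtain ⟨M, hM0, hM⟩ : ∃ M > 0, ∀ x ∈ Icc b R, g x ^ 2 ≤ M := by
    obtain ⟨C, hC⟩ := isCompact_Icc.exists_bound_of_continuousOn (hg.pow 2).continuousOn
    exact ⟨max C 1, by positivity,
      fun x hx => (le_abs_self _).trans ((hC x hx).trans (le_max_left _ _))⟩
  have hq : (ω / b) ^ 2 < 1 := pow_lt_one₀ (by positivity) ((div_lt_one hb0).mpr hωb) two_ne_zero
  obtain ⟨k, hk⟩ := exists_pow_lt_of_lt_one (div_pos hε hM0) hq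
  have hbk : 0 < b ^ (2 * k) := by positivity
  refine ⟨k, M / b ^ (2 * k), div_nonneg hM0.le hbk.le, ?_, fun x hxR => ?_⟩
  · calc M / b ^ (2 * k) * ω ^ (2 * k) = M * ((ω / b) ^ 2) ^ k := by
          rw [← pow_mul, div_pow]; ring
      _ ≤ ε := by rw [lt_div_iff₀' hM0] at hk; exact hk.le
  · have hxk : 0 ≤ M / b ^ (2 * k) * x ^ (2 * k) :=
      mul_nonneg (div_nonneg hM0.le hbk.le) ((even_two_mul k).pow_nonneg x)
    rcases le_or_gt x ω with hxω | hωx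
    · rw [hg0 x hxω]; linarith
    rcases lt_or_ge x b with hxb | hbx
    · have hgx : g x ^ 2 < ε := hb ⟨hωx.le, hxb⟩
      linarith
    · calc g x ^ 2 ≤ M / b ^ (2 * k) * b ^ (2 * k) := by
            rw [div_mul_cancel₀ _ hbk.ne']; exact hM x ⟨hbx, hxR⟩
        _ ≤ M / b ^ (2 * k) * x ^ (2 * k) := by gcongr
        _ ≤ ε + M / b ^ (2 * k) * x ^ (2 * k) := by linarith

section
variable {H : Type*} [NormedAddCommGroup H] [InnerProductSpace ℂ H]

lemma re_inner_algebraMap_add_smul_apply (c d : ℝ) (T : H →L[ℂ] H) (f : H) :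
    re ⟪(algebraMap ℝ (H →L[ℂ] H) c + d • T) f, f⟫_ℂ = c * ‖f‖ ^ 2 + d * re ⟪T f, f⟫_ℂ := by
  rw [Algebra.algebraMap_eq_smul_one, add_apply, smul_apply, smul_apply, one_apply_eq_self,
    real_smul_eq_coe_smul (K := ℂ), real_smul_eq_coe_smul (K := ℂ), inner_add_left,
    inner_smul_left, inner_smul_left, map_add, conj_ofReal, conj_ofReal, re_ofReal_mul,
    re_ofReal_mul, inner_self_eq_norm_sq]

lemma ContinuousLinearMap.re_inner_apply_le_of_le {S T : H →L[ℂ] H} (h : S ≤ T) (f : H) :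
    re ⟪S f, f⟫_ℂ ≤ re ⟪T f, f⟫_ℂ := by
  have := ((le_def S T).mp h).re_inner_nonneg_left f
  rw [sub_apply, inner_sub_left, map_sub] at this
  linarith

variable [CompleteSpace H]

lemma IsSelfAdjoint.norm_apply_sq {T : H →L[ℂ] H} (hT : IsSelfAdjoint T) (f : H) :
    ‖T f‖ ^ 2 = re ⟪(T ^ 2) f, f⟫_ℂ := by
  rw [apply_norm_sq_eq_inner_adjoint_left, hT.adjoint_eq, sq]
  rfl

lemma norm_cfc_apply_sq_le {A : H →L[ℂ] H} (hA : IsSelfAdjoint A) {g : ℝ → ℝ}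
    (hg : Continuous g) {c d : ℝ} {k : ℕ}
    (hbound : ∀ x ∈ spectrum ℝ A, g x ^ 2 ≤ c + d * x ^ (2 * k)) (f : H) :
    ‖cfc g A f‖ ^ 2 ≤ c * ‖f‖ ^ 2 + d * ‖(A ^ k) f‖ ^ 2 := by
  have hcont : Continuous fun x : ℝ => c + d * x ^ (2 * k) := by fun_prop
  calc ‖cfc g A f‖ ^ 2 = re ⟪cfc (fun x => g x ^ 2) A f, f⟫_ℂ := by
        rw [(cfc_predicate g A).norm_apply_sq, cfc_pow g 2 A hg.continuousOn hA]
    _ ≤ re ⟪cfc (fun x => c + d * x ^ (2 * k)) A f, f⟫_ℂ :=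
        re_inner_apply_le_of_le (cfc_mono hbound (hg.pow 2).continuousOn hcont.continuousOn) f
    _ = c * ‖f‖ ^ 2 + d * ‖(A ^ k) f‖ ^ 2 := by
        rw [cfc_const_add c _ A (by fun_prop) hA, cfc_const_mul d _ A (by fun_prop),
          cfc_pow_id A (2 * k) hA, re_inner_algebraMap_add_smul_apply, pow_mul',
          (hA.pow k).norm_apply_sq]

end

/-- If `A` is a bounded self-adjoint positive semidefinite operator on a complex
Hilbert space, `ω ≥ 0`, and `f` satisfies `‖A^k f‖ ≤ ω^k ‖f‖` for all `k ∈ ℕ`, then the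
spectral projection of `A` onto `(ω, ∞)` applied to `f` is zero, i.e. `f` lies in the range
of the spectral projection onto `[0, ω]`. -/
theorem stmt_2 {H : Type*} [NormedAddCommGroup H] [InnerProductSpace ℂ H] [CompleteSpace H]
    (A : H →L[ℂ] H) (hA : A.IsPositive) (ω : ℝ) (hω : 0 ≤ ω) (f : H)
    (hf : ∀ k : ℕ, ‖(A ^ k) f‖ ≤ ω ^ k * ‖f‖) : f ∈ specSubspace A ω := by
  intro g hg hg0
  obtain ⟨R, hR⟩ := (spectrum.isCompact (𝕜 := ℝ) A).bddAbove
  have hsmall : ∀ ε > 0, ‖cfc g A f‖ ^ 2 ≤ ε * (2 * ‖f‖ ^ 2) := by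
    intro ε hε
    obtain ⟨k, d, hd, hdω, hbound⟩ := exists_sq_le_add_mul_pow hg hω hg0 R hε
    have hAk : ‖(A ^ k) f‖ ^ 2 ≤ ω ^ (2 * k) * ‖f‖ ^ 2 := by
      rw [pow_mul', ← mul_pow]
      gcongr
      exact hf k
    calc ‖cfc g A f‖ ^ 2 ≤ ε * ‖f‖ ^ 2 + d * ‖(A ^ k) f‖ ^ 2 :=
          norm_cfc_apply_sq_le hA.isSelfAdjoint hg (fun x hx => hbound x (hR hx)) f
      _ ≤ ε * ‖f‖ ^ 2 + d * ω ^ (2 * k) * ‖f‖ ^ 2 := by rw [mul_assoc]; gcongr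
      _ ≤ ε * (2 * ‖f‖ ^ 2) := by linarith [mul_le_mul_of_nonneg_right hdω (sq_nonneg ‖f‖)]
  have hlim : Tendsto (fun ε : ℝ => ε * (2 * ‖f‖ ^ 2)) (𝓝[>] 0) (𝓝 0) :=
    tendsto_nhdsWithin_of_tendsto_nhds ((continuous_mul_const _).tendsto' 0 0 (zero_mul _))
  have hnonpos : ‖cfc g A f‖ ^ 2 ≤ 0 := ge_of_tendsto hlim (eventually_nhdsWithin_of_forall hsmall)
  simpa using hnonpos
end

section
/- Let G be a connected simple graph with uniformly bounded vertex degrees, L its normalized combinatorial Laplacian acting on L²(V(G)), S ⊂ V(G), and Λ > 0 such that ‖φ‖ ≤ Λ‖Lφ‖ for all φ ∈ L²(G) supported in S. If ω < 1/Λ and f, g are two functions in the Paley–Wiener space PW_ω(G) (i.e., in the range of the spectral projection of L onto [0, ω]) that agree on V(G)∖S, then f = g on all of V(G). -/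
open scoped ComplexConjugate

section SpectralSubspace

variable {H : Type*} [NormedAddCommGroup H] [InnerProductSpace ℂ H] [CompleteSpace H]
  {A : H →L[ℂ] H}

theorem sub_mem_specSubspace {ω : ℝ} {x y : H} (hx : x ∈ specSubspace A ω)
    (hy : y ∈ specSubspace A ω) : x - y ∈ specSubspace A ω := fun g hg hgω => by
  rw [map_sub, hx g hg hgω, hy g hg hgω, sub_self]

theorem specSubspace_mono {ω ω' : ℝ} (h : ω ≤ ω') :
    specSubspace A ω ⊆ specSubspace A ω' :=
  fun _ hx g hg hgω => hx g hg fun t ht => hgω t (ht.trans h)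

/-- On `PW_ω`, `A` agrees with `cfc (min · ω) A`, whose norm is at most `ω` when the spectrum
of `A` is nonnegative. -/
theorem norm_apply_le_of_mem_specSubspace (hA : 0 ≤ A) {ω : ℝ} (hω : 0 ≤ ω) {x : H}
    (hx : x ∈ specSubspace A ω) : ‖A x‖ ≤ ω * ‖x‖ := by
  have hmin : Continuous fun t : ℝ => min t ω := continuous_id.min continuous_const
  have hA_eq : A x = cfc (fun t : ℝ => min t ω) A x := by
    have hrest : cfc (fun t : ℝ => t - min t ω) A x = 0 :=
      hx _ (continuous_id.sub hmin) fun t ht => by rw [min_eq_left ht, sub_self]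
    calc A x = cfc (fun t : ℝ => min t ω + (t - min t ω)) A x := by
          simp only [add_sub_cancel, cfc_id' ℝ A]
      _ = cfc (fun t : ℝ => min t ω) A x := by
          rw [cfc_add A _ _, add_apply, hrest, add_zero]
  have hnorm : ‖cfc (fun t : ℝ => min t ω) A‖ ≤ ω :=
    norm_cfc_le hω fun t ht => by
      rw [Real.norm_eq_abs, abs_of_nonneg (le_min (spectrum_nonneg_of_nonneg hA ht) hω)]
      exact min_le_right _ _
  rw [hA_eq]
  exact (ContinuousLinearMap.le_opNorm _ _).trans
    (mul_le_mul_of_nonneg_right hnorm (norm_nonneg x))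

end SpectralSubspace

namespace SimpleGraph

variable {V : Type*} (G : SimpleGraph V) [∀ v, Fintype (G.neighborSet v)]

def neighborSigmaSwap : (Σ v, G.neighborSet v) ≃ (Σ v, G.neighborSet v) where
  toFun p := ⟨p.2, p.1, p.2.2.symm⟩
  invFun p := ⟨p.2, p.1, p.2.2.symm⟩
  left_inv _ := rfl
  right_inv _ := rfl

noncomputable def degreeScaled (f : V → ℂ) (v : V) : ℂ := f v / (Real.sqrt (G.degree v) : ℂ)

variable {G} {D : ℕ}

theorem summable_sigma_neighborSet_fst (hD : ∀ v, G.degree v ≤ D) {h : V → ℝ} (h0 : 0 ≤ h)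
    (hs : Summable h) : Summable fun p : Σ v, G.neighborSet v => h p.1 := by
  refine (summable_sigma_of_nonneg fun p => h0 p.1).2 ⟨fun _ => .of_finite, ?_⟩
  refine (hs.mul_left (D : ℝ)).of_nonneg_of_le (fun v => tsum_nonneg fun _ => h0 v) fun v => ?_
  rw [tsum_fintype]
  change ∑ _u : G.neighborSet v, h v ≤ D * h v
  rw [Finset.sum_const, Finset.card_univ, card_neighborSet_eq_degree, nsmul_eq_mul]
  exact mul_le_mul_of_nonneg_right (by exact_mod_cast hD v) (h0 v)

theorem summable_sigma_neighborSet_snd (hD : ∀ v, G.degree v ≤ D) {h : V → ℝ} (h0 : 0 ≤ h)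
    (hs : Summable h) : Summable fun p : Σ v, G.neighborSet v => h p.2 :=
  G.neighborSigmaSwap.summable_iff.2 (summable_sigma_neighborSet_fst hD h0 hs)

theorem summable_conj_mul_sub (hD : ∀ v, G.degree v ≤ D) {F : V → ℂ}
    (hF : Summable fun v => ‖F v‖ ^ 2) :
    Summable fun p : Σ v, G.neighborSet v => conj (F p.1) * (F p.1 - F p.2) := by
  have h0 : (0 : V → ℝ) ≤ fun v => ‖F v‖ ^ 2 := fun v => sq_nonneg _
  refine Summable.of_norm <| ((summable_sigma_neighborSet_fst hD h0 hF).mul_left 2).add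
    (summable_sigma_neighborSet_snd hD h0 hF) |>.of_nonneg_of_le (fun _ => norm_nonneg _)
    fun p => ?_
  calc ‖conj (F p.1) * (F p.1 - F p.2)‖ = ‖F p.1‖ * ‖F p.1 - F p.2‖ := by
        rw [norm_mul, RCLike.norm_conj]
    _ ≤ ‖F p.1‖ * (‖F p.1‖ + ‖F p.2‖) := by gcongr; exact norm_sub_le _ _
    _ ≤ 2 * ‖F p.1‖ ^ 2 + ‖F p.2‖ ^ 2 := by nlinarith [sq_nonneg (‖F p.1‖ - ‖F p.2‖)]

/-- A dart and its reversal together contribute `|F u - F v|²`. -/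
theorem re_tsum_conj_mul_sub_nonneg (hD : ∀ v, G.degree v ≤ D) {F : V → ℂ}
    (hF : Summable fun v => ‖F v‖ ^ 2) :
    0 ≤ (∑' p : Σ v, G.neighborSet v, conj (F p.1) * (F p.1 - F p.2)).re := by
  set t : (Σ v, G.neighborSet v) → ℂ := fun p => conj (F p.1) * (F p.1 - F p.2)
  have hre : Summable fun p => (t p).re := Complex.reCLM.summable (summable_conj_mul_sub hD hF)
  have hpair : ∀ p, (t p).re + (t (G.neighborSigmaSwap p)).re = ‖F p.1 - F p.2‖ ^ 2 := by
    intro p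
    simp only [t, neighborSigmaSwap, Equiv.coe_fn_mk, ← Complex.add_re]
    rw [show conj (F p.1) * (F p.1 - F p.2) + conj (F p.2) * (F p.2 - F p.1)
      = conj (F p.1 - F p.2) * (F p.1 - F p.2) by rw [map_sub]; ring, Complex.conj_mul']
    norm_cast
  have h2 : 2 * (∑' p, t p).re = ∑' p : Σ v, G.neighborSet v, ‖F p.1 - F p.2‖ ^ 2 :=
    calc 2 * (∑' p, t p).re = ∑' p, (t p).re + ∑' p, (t (G.neighborSigmaSwap p)).re := by
          rw [Complex.re_tsum (summable_conj_mul_sub hD hF), two_mul,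
            G.neighborSigmaSwap.tsum_eq fun p => (t p).re]
      _ = ∑' p, ((t p).re + (t (G.neighborSigmaSwap p)).re) :=
          (hre.tsum_add (G.neighborSigmaSwap.summable_iff.2 hre)).symm
      _ = _ := tsum_congr hpair
  have : 0 ≤ ∑' p : Σ v, G.neighborSet v, ‖F p.1 - F p.2‖ ^ 2 :=
    tsum_nonneg fun _ => sq_nonneg _
  show 0 ≤ (∑' p, t p).re
  linarith

theorem norm_degreeScaled_le (f : V → ℂ) (v : V) : ‖G.degreeScaled f v‖ ≤ ‖f v‖ := by
  rw [degreeScaled, norm_div, Complex.norm_real, Real.norm_of_nonneg (Real.sqrt_nonneg _)]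
  rcases Nat.eq_zero_or_pos (G.degree v) with h | h
  · simp [h] -- an isolated vertex gives `f v / 0 = 0`
  · exact div_le_self (norm_nonneg _) (Real.one_le_sqrt.2 (by exact_mod_cast h))

theorem summable_norm_degreeScaled_sq (f : lp (fun _ : V => ℂ) 2) :
    Summable fun v => ‖G.degreeScaled f v‖ ^ 2 := by
  have hf : Summable fun v => ‖f v‖ ^ 2 := by
    simpa [Real.rpow_natCast] using (lp.memℓp f).summable (p := 2) (by norm_num)
  exact hf.of_nonneg_of_le (fun _ => sq_nonneg _) fun v =>
    pow_le_pow_left₀ (norm_nonneg _) (norm_degreeScaled_le f v) 2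

theorem inner_apply_eq_tsum_conj_mul_sub (hD : ∀ v, G.degree v ≤ D)
    (L : lp (fun _ : V => ℂ) 2 →L[ℂ] lp (fun _ : V => ℂ) 2)
    (hL : ∀ (f : lp (fun _ : V => ℂ) 2) (v : V),
      L f v = (1 / (Real.sqrt (G.degree v) : ℂ)) *
        ∑ u ∈ G.neighborFinset v,
          (f v / (Real.sqrt (G.degree v) : ℂ) - f u / (Real.sqrt (G.degree u) : ℂ)))
    (f : lp (fun _ : V => ℂ) 2) :
    inner ℂ f (L f) = ∑' p : Σ v, G.neighborSet v,
      conj (G.degreeScaled f p.1) * (G.degreeScaled f p.1 - G.degreeScaled f p.2) := by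
  rw [lp.inner_eq_tsum,
    (summable_conj_mul_sub hD (summable_norm_degreeScaled_sq f)).tsum_sigma]
  refine tsum_congr fun v => ?_
  rw [tsum_fintype, RCLike.inner_apply, hL, neighborFinset_def, ← Finset.sum_set_coe,
    Finset.mul_sum, Finset.sum_mul]
  refine Finset.sum_congr rfl fun u _ => ?_
  simp only [degreeScaled, map_div₀, Complex.conj_ofReal]
  ring

theorem normalizedLaplacian_nonneg (hD : ∀ v, G.degree v ≤ D)
    {L : lp (fun _ : V => ℂ) 2 →L[ℂ] lp (fun _ : V => ℂ) 2} (hsa : IsSelfAdjoint L)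
    (hL : ∀ (f : lp (fun _ : V => ℂ) 2) (v : V),
      L f v = (1 / (Real.sqrt (G.degree v) : ℂ)) *
        ∑ u ∈ G.neighborFinset v,
          (f v / (Real.sqrt (G.degree v) : ℂ) - f u / (Real.sqrt (G.degree u) : ℂ))) :
    0 ≤ L := by
  rw [ContinuousLinearMap.nonneg_iff_isPositive, ContinuousLinearMap.isPositive_def']
  refine ⟨hsa, fun f => ?_⟩
  rw [ContinuousLinearMap.reApplyInnerSelf_apply, inner_re_symm,
    inner_apply_eq_tsum_conj_mul_sub hD L hL]
  exact re_tsum_conj_mul_sub_nonneg hD (summable_norm_degreeScaled_sq f)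

end SimpleGraph

theorem stmt_5_general {V : Type*} (G : SimpleGraph V) [∀ v, Fintype (G.neighborSet v)]
    (D : ℕ) (hD : ∀ v, G.degree v ≤ D)
    (L : lp (fun _ : V => ℂ) 2 →L[ℂ] lp (fun _ : V => ℂ) 2) (hsa : IsSelfAdjoint L)
    (hL : ∀ (f : lp (fun _ : V => ℂ) 2) (v : V),
      L f v = (1 / (Real.sqrt (G.degree v) : ℂ)) *
        ∑ u ∈ G.neighborFinset v,
          (f v / (Real.sqrt (G.degree v) : ℂ) - f u / (Real.sqrt (G.degree u) : ℂ)))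
    (S : Set V) (Λ : ℝ) (hΛ : 0 < Λ)
    (hPoin : ∀ φ : lp (fun _ : V => ℂ) 2, (∀ v ∉ S, φ v = 0) → ‖φ‖ ≤ Λ * ‖L φ‖)
    (ω : ℝ) (hω : ω < 1 / Λ)
    (f g : lp (fun _ : V => ℂ) 2)
    (hf : f ∈ specSubspace L ω) (hg : g ∈ specSubspace L ω)
    (hfg : ∀ v ∉ S, f v = g v) : f = g := by
  set ω₀ := max ω 0
  have hφ : f - g ∈ specSubspace L ω₀ :=
    specSubspace_mono (le_max_left ω 0) (sub_mem_specSubspace hf hg)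
  have hLφ : ‖L (f - g)‖ ≤ ω₀ * ‖f - g‖ :=
    norm_apply_le_of_mem_specSubspace (G.normalizedLaplacian_nonneg hD hsa hL)
      (le_max_right ω 0) hφ
  have hsupp : ∀ v ∉ S, (f - g) v = 0 := fun v hv => by
    rw [lp.coeFn_sub, Pi.sub_apply, hfg v hv, sub_self]
  have hΛω : Λ * ω₀ < 1 := by
    rcases max_choice ω 0 with h | h <;> simp only [ω₀, h]
    · exact (lt_div_iff₀' hΛ).1 hω
    · simp
  have hle : ‖f - g‖ ≤ Λ * ω₀ * ‖f - g‖ := calc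
    ‖f - g‖ ≤ Λ * ‖L (f - g)‖ := hPoin _ hsupp
    _ ≤ Λ * (ω₀ * ‖f - g‖) := by gcongr
    _ = Λ * ω₀ * ‖f - g‖ := by ring
  have : ‖f - g‖ = 0 := by nlinarith [norm_nonneg (f - g)]
  exact sub_eq_zero.1 (norm_eq_zero.1 this)

/-- On a connected simple graph `G` with uniformly bounded degrees, with
normalized Laplacian `L` on `L²(V(G))`, if `S ⊂ V(G)` is a `Λ`-set and `ω < 1/Λ`, then
any two functions of the Paley–Wiener space `PW_ω(G)` agreeing on `V(G) ∖ S` coincide. -/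
theorem stmt_5 {V : Type*} (G : SimpleGraph V) [∀ v, Fintype (G.neighborSet v)]
    (hconn : G.Connected) (D : ℕ) (hD : ∀ v, G.degree v ≤ D)
    (L : lp (fun _ : V => ℂ) 2 →L[ℂ] lp (fun _ : V => ℂ) 2) (hsa : IsSelfAdjoint L)
    (hL : ∀ (f : lp (fun _ : V => ℂ) 2) (v : V),
      L f v = (1 / (Real.sqrt (G.degree v) : ℂ)) *
        ∑ u ∈ G.neighborFinset v,
          (f v / (Real.sqrt (G.degree v) : ℂ) - f u / (Real.sqrt (G.degree u) : ℂ)))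
    (S : Set V) (Λ : ℝ) (hΛ : 0 < Λ)
    (hPoin : ∀ φ : lp (fun _ : V => ℂ) 2, (∀ v ∉ S, φ v = 0) → ‖φ‖ ≤ Λ * ‖L φ‖)
    (ω : ℝ) (hω : ω < 1 / Λ)
    (f g : lp (fun _ : V => ℂ) 2)
    (hf : f ∈ specSubspace L ω) (hg : g ∈ specSubspace L ω)
    (hfg : ∀ v ∉ S, f v = g v) : f = g :=
  stmt_5_general G D hD L hsa hL S Λ hΛ hPoin ω hω f g hf hg hfg
end

section
/- Let A be a bounded self-adjoint positive semidefinite operator on Hilbert space H, S a closed subspace of H with the Poincaré property ‖φ‖ ≤ Λ‖Aφ‖ for all φ ∈ S, and ω < 1/Λ. If f ∈ H satisfies ‖A^k f‖ ≤ ω^k‖f‖ for all k ∈ ℕ, f ∈ S, then f = 0. -/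
/-- Let `A` be a bounded self-adjoint positive semidefinite operator on a
complex Hilbert space `H`, `S` a closed subspace with the Poincaré property
`‖φ‖ ≤ Λ‖Aφ‖` for all `φ ∈ S`, and `ω < 1/Λ`. If `f ∈ S` satisfies
`‖A^k f‖ ≤ ω^k ‖f‖` for all `k ∈ ℕ`, then `f = 0`. -/
theorem stmt_6 {H : Type*} [NormedAddCommGroup H] [InnerProductSpace ℂ H] [CompleteSpace H]
    (A : H →L[ℂ] H) (hA : A.IsPositive)
    (S : Submodule ℂ H) (hS : IsClosed (S : Set H))
    (Λ : ℝ) (hΛ : 0 < Λ) (hPoin : ∀ φ ∈ S, ‖φ‖ ≤ Λ * ‖A φ‖)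
    (ω : ℝ) (hω : 0 ≤ ω) (hωΛ : ω < 1 / Λ)
    (f : H) (hfS : f ∈ S) (hf : ∀ k : ℕ, ‖(A ^ k) f‖ ≤ ω ^ k * ‖f‖) : f = 0 := by
  have h1 := hf 1
  simp [pow_one] at h1
  have h2 : ‖f‖ ≤ Λ * (ω * ‖f‖) := (hPoin f hfS).trans (by nlinarith)
  have hΛω : Λ * ω < 1 := by
    rw [lt_div_iff₀ hΛ] at hωΛ; linarith [mul_comm Λ ω]
  have : ‖f‖ = 0 := by nlinarith [norm_nonneg f]
  simpa using this
end

section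
/- Let S = {1, 2, ..., N} ⊂ ℤ be a set of N successive vertices of the line graph ℤ. Then for every φ ∈ ℓ²(ℤ) supported in S, ‖φ‖ ≤ (1/2) sin⁻²(π/(2N+2)) · ‖L_ℤ φ‖, where L_ℤ is the normalized Laplacian on ℤ. -/
/-!
Write `a n = ‖φ n‖`. Expanding the Laplacian, `re ⟪φ, L φ⟫ ≥ ∑ a n ^ 2 - ∑ a n * a (n + 1)`.
The edge sum is at most `cos (π / (N + 1)) * ∑ a n ^ 2`: bound each edge term by the weighted
AM-GM inequality `2 x y ≤ (q / p) x ^ 2 + (p / q) y ^ 2` with the weights `v n = sin (n π / (N + 1))`,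
the positive Dirichlet eigenvector of the path, so that summing by parts leaves
`(v (n + 1) + v (n - 1)) / (2 v n) = cos (π / (N + 1))` in front of each `a n ^ 2`.
Since `1 - cos (π / (N + 1)) = 2 sin² (π / (2N + 2))`, Cauchy–Schwarz on `⟪φ, L φ⟫` concludes.
-/

open Finset Real ComplexConjugate
open scoped InnerProductSpace

theorem sum_Icc_comp_add_one_eq_sum {M : Type*} [AddCommMonoid M] (f : ℤ → M) (a b : ℤ)
    (ha : f a = 0) (hb : f (b + 1) = 0) :
    ∑ n ∈ Icc a b, f (n + 1) = ∑ n ∈ Icc a b, f n := by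
  have hshift : ∑ n ∈ Icc a b, f (n + 1) = ∑ n ∈ Icc (a + 1) (b + 1), f n := by
    rw [← map_add_right_Icc, sum_map]
    rfl
  have hleft : ∑ n ∈ Icc (a + 1) (b + 1), f n = ∑ n ∈ Icc a (b + 1), f n :=
    sum_subset (Icc_subset_Icc_left (by omega)) fun n hn hn' => by
      obtain rfl : n = a := by simp only [mem_Icc] at hn hn'; omega
      exact ha
  have hright : ∑ n ∈ Icc a b, f n = ∑ n ∈ Icc a (b + 1), f n :=
    sum_subset (Icc_subset_Icc_right (by omega)) fun n hn hn' => by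
      obtain rfl : n = b + 1 := by simp only [mem_Icc] at hn hn'; omega
      exact hb
  rw [hshift, hleft, hright]

theorem two_mul_mul_le_div_mul_sq_add_div_mul_sq {p q x y : ℝ} (hp : 0 ≤ p) (hq : 0 ≤ q)
    (hpx : p = 0 → x = 0) (hqy : q = 0 → y = 0) :
    2 * (x * y) ≤ q / p * x ^ 2 + p / q * y ^ 2 := by
  -- the degenerate weights are harmless because `q / 0 = 0` in Lean
  rcases hp.eq_or_lt with rfl | hp
  · simp [hpx rfl]
  rcases hq.eq_or_lt with rfl | hq
  · simp [hqy rfl]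
  have key : q / p * x ^ 2 + p / q * y ^ 2 - 2 * (x * y) = (q * x - p * y) ^ 2 / (p * q) := by
    field_simp
    ring
  have : 0 ≤ (q * x - p * y) ^ 2 / (p * q) := by positivity
  linarith

noncomputable def sineMode (N : ℕ) (n : ℤ) : ℝ := sin (n * (π / (N + 1)))

theorem sineMode_add_one_add_sineMode_sub_one (N : ℕ) (n : ℤ) :
    sineMode N (n + 1) + sineMode N (n - 1) = 2 * cos (π / (N + 1)) * sineMode N n := by
  simp only [sineMode]
  push_cast
  rw [add_mul, sub_mul, one_mul, sin_add, sin_sub]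
  ring

theorem sineMode_nonneg {N : ℕ} {n : ℤ} (h₀ : 0 ≤ n) (h₁ : n ≤ N + 1) : 0 ≤ sineMode N n := by
  have hn₀ : (0 : ℝ) ≤ n := by exact_mod_cast h₀
  have hn₁ : (n : ℝ) ≤ N + 1 := by exact_mod_cast h₁
  apply sin_nonneg_of_nonneg_of_le_pi (by positivity)
  calc (n : ℝ) * (π / (N + 1)) ≤ (N + 1) * (π / (N + 1)) := by gcongr
    _ = π := by field_simp

theorem sineMode_pos {N : ℕ} {n : ℤ} (h₀ : 1 ≤ n) (h₁ : n ≤ N) : 0 < sineMode N n := by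
  have hn₀ : (1 : ℝ) ≤ n := by exact_mod_cast h₀
  have hn₁ : (n : ℝ) ≤ N := by exact_mod_cast h₁
  apply sin_pos_of_pos_of_lt_pi (by positivity)
  calc (n : ℝ) * (π / (N + 1)) < (N + 1) * (π / (N + 1)) := by gcongr; linarith
    _ = π := by field_simp

theorem sum_mul_add_one_le_cos_mul_sum_sq (N : ℕ) (a : ℤ → ℝ) (h₀ : a 0 = 0)
    (h₁ : a (N + 1) = 0) :
    ∑ n ∈ Icc (0 : ℤ) N, a n * a (n + 1) ≤ cos (π / (N + 1)) * ∑ n ∈ Icc (0 : ℤ) N, a n ^ 2 := by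
  set v := sineMode N
  have hv : ∀ n ∈ Icc (0 : ℤ) (N + 1), 0 ≤ v n ∧ (v n = 0 → a n = 0) := by
    intro n hn
    rw [mem_Icc] at hn
    refine ⟨sineMode_nonneg hn.1 hn.2, fun hvn => ?_⟩
    obtain rfl | rfl | hn' : n = 0 ∨ n = N + 1 ∨ (1 ≤ n ∧ n ≤ N) := by omega
    · exact h₀
    · exact h₁
    · exact absurd hvn (sineMode_pos hn'.1 hn'.2).ne'
  have hedge : ∀ n ∈ Icc (0 : ℤ) N,
      a n * a (n + 1) ≤ (v (n + 1) / v n * a n ^ 2 + v n / v (n + 1) * a (n + 1) ^ 2) / 2 := by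
    intro n hn
    rw [mem_Icc] at hn
    obtain ⟨hvn, han⟩ := hv n (mem_Icc.2 ⟨hn.1, by omega⟩)
    obtain ⟨hvn', han'⟩ := hv (n + 1) (mem_Icc.2 ⟨by omega, by omega⟩)
    linarith [two_mul_mul_le_div_mul_sq_add_div_mul_sq hvn hvn' han han']
  have hshift : ∑ n ∈ Icc (0 : ℤ) N, v n / v (n + 1) * a (n + 1) ^ 2
      = ∑ n ∈ Icc (0 : ℤ) N, v (n - 1) / v n * a n ^ 2 := by
    simpa using sum_Icc_comp_add_one_eq_sum (fun n => v (n - 1) / v n * a n ^ 2) 0 N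
      (by simp [h₀]) (by simp [h₁])
  calc ∑ n ∈ Icc (0 : ℤ) N, a n * a (n + 1)
      ≤ ∑ n ∈ Icc (0 : ℤ) N, (v (n + 1) / v n * a n ^ 2 + v n / v (n + 1) * a (n + 1) ^ 2) / 2 :=
        sum_le_sum hedge
    _ = ∑ n ∈ Icc (0 : ℤ) N, (v (n + 1) / v n * a n ^ 2 + v (n - 1) / v n * a n ^ 2) / 2 := by
        simp only [← sum_div, sum_add_distrib, hshift]
    _ = ∑ n ∈ Icc (0 : ℤ) N, cos (π / (N + 1)) * a n ^ 2 := by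
        refine sum_congr rfl fun n hn => ?_
        obtain ⟨-, han⟩ := hv n (mem_Icc.2 ⟨(mem_Icc.1 hn).1, by linarith [(mem_Icc.1 hn).2]⟩)
        by_cases hvn : v n = 0
        · simp [han hvn]
        · have hrec : v (n + 1) = 2 * cos (π / (N + 1)) * v n - v (n - 1) := by
            linarith [sineMode_add_one_add_sineMode_sub_one N n]
          rw [hrec]
          field_simp
          ring
    _ = cos (π / (N + 1)) * ∑ n ∈ Icc (0 : ℤ) N, a n ^ 2 := (mul_sum ..).symm

theorem lp.inner_eq_sum_of_forall_notMem {ι 𝕜 : Type*} [RCLike 𝕜] {G : ι → Type*}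
    [∀ i, NormedAddCommGroup (G i)] [∀ i, InnerProductSpace 𝕜 (G i)] (f g : lp G 2)
    (s : Finset ι) (hf : ∀ i ∉ s, f i = 0) :
    ⟪f, g⟫_𝕜 = ∑ i ∈ s, ⟪f i, g i⟫_𝕜 := by
  rw [lp.inner_eq_tsum, tsum_eq_sum fun i hi => by simp [hf i hi]]

theorem lp.norm_sq_eq_sum_of_forall_notMem {ι 𝕜 : Type*} [RCLike 𝕜] {G : ι → Type*}
    [∀ i, NormedAddCommGroup (G i)] [∀ i, InnerProductSpace 𝕜 (G i)] (f : lp G 2)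
    (s : Finset ι) (hf : ∀ i ∉ s, f i = 0) :
    ‖f‖ ^ 2 = ∑ i ∈ s, ‖f i‖ ^ 2 := by
  rw [@norm_sq_eq_re_inner 𝕜, lp.inner_eq_sum_of_forall_notMem f f s hf, map_sum]
  simp

theorem norm_sq_sub_le_re_conj_mul_sub_average (z x y : ℂ) :
    ‖z‖ ^ 2 - (‖z‖ * ‖x‖ + ‖z‖ * ‖y‖) / 2 ≤ (conj z * (z - (x + y) / 2)).re := by
  have hx := Complex.re_le_norm (conj z * x)
  have hy := Complex.re_le_norm (conj z * y)
  rw [norm_mul, Complex.norm_conj] at hx hy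
  have : (conj z * (z - (x + y) / 2)).re = ‖z‖ ^ 2 - ((conj z * x).re + (conj z * y).re) / 2 := by
    rw [mul_sub, Complex.sub_re, Complex.conj_mul', mul_div_assoc', mul_add, Complex.div_ofNat_re,
      Complex.add_re]
    norm_cast
  linarith

theorem sum_sq_sub_sum_mul_add_one_le_re_inner
    (L : lp (fun _ : ℤ => ℂ) 2 →L[ℂ] lp (fun _ : ℤ => ℂ) 2)
    (hL : ∀ (f : lp (fun _ : ℤ => ℂ) 2) (n : ℤ), L f n = f n - (f (n - 1) + f (n + 1)) / 2)
    {a b : ℤ} {φ : lp (fun _ : ℤ => ℂ) 2} (hφ : ∀ n ∉ Icc a b, φ n = 0) :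
    ∑ n ∈ Icc a b, ‖φ n‖ ^ 2 - ∑ n ∈ Icc a b, ‖φ n‖ * ‖φ (n + 1)‖ ≤ (⟪φ, L φ⟫_ℂ).re := by
  have hshift : ∑ n ∈ Icc a b, ‖φ n‖ * ‖φ (n - 1)‖ = ∑ n ∈ Icc a b, ‖φ n‖ * ‖φ (n + 1)‖ := by
    simpa [mul_comm] using (sum_Icc_comp_add_one_eq_sum (fun n => ‖φ n‖ * ‖φ (n - 1)‖) a b
      (by simp [hφ (a - 1)]) (by simp [hφ (b + 1)])).symm
  rw [lp.inner_eq_sum_of_forall_notMem φ (L φ) _ hφ, Complex.re_sum]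
  calc ∑ n ∈ Icc a b, ‖φ n‖ ^ 2 - ∑ n ∈ Icc a b, ‖φ n‖ * ‖φ (n + 1)‖
      = ∑ n ∈ Icc a b, (‖φ n‖ ^ 2 - (‖φ n‖ * ‖φ (n - 1)‖ + ‖φ n‖ * ‖φ (n + 1)‖) / 2) := by
        rw [sum_sub_distrib, ← sum_div, sum_add_distrib, hshift]
        ring
    _ ≤ ∑ n ∈ Icc a b, (⟪φ n, L φ n⟫_ℂ).re := sum_le_sum fun n _ => by
        rw [hL, RCLike.inner_apply']
        exact norm_sq_sub_le_re_conj_mul_sub_average _ _ _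

theorem stmt_9_general (L : lp (fun _ : ℤ => ℂ) 2 →L[ℂ] lp (fun _ : ℤ => ℂ) 2)
    (hL : ∀ (f : lp (fun _ : ℤ => ℂ) 2) (n : ℤ),
      L f n = f n - (f (n - 1) + f (n + 1)) / 2)
    (N : ℕ)
    (φ : lp (fun _ : ℤ => ℂ) 2)
    (hsupp : ∀ n : ℤ, n ∉ Set.Icc (1 : ℤ) (N : ℤ) → φ n = 0) :
    ‖φ‖ ≤ (1 / 2) * ((Real.sin (Real.pi / (2 * N + 2))) ^ 2)⁻¹ * ‖L φ‖ := by
  set θ := π / (2 * N + 2) with hθ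
  have hsin : 0 < sin θ := sin_pos_of_pos_of_lt_pi (by positivity) <|
    div_lt_self pi_pos (by linarith [(N.cast_nonneg : (0 : ℝ) ≤ N)])
  have hcos : cos (π / (N + 1)) = 1 - 2 * sin θ ^ 2 := by
    rw [sin_sq_eq_half_sub, show 2 * θ = π / (N + 1) by rw [hθ]; field_simp]
    ring
  have hφ : ∀ n ∉ Icc (0 : ℤ) N, φ n = 0 := fun n hn =>
    hsupp n fun h => hn (mem_Icc.2 ⟨by linarith [h.1], h.2⟩)
  have hform : 2 * sin θ ^ 2 * ‖φ‖ ^ 2 ≤ (⟪φ, L φ⟫_ℂ).re := by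
    have hdiag := sum_sq_sub_sum_mul_add_one_le_re_inner L hL hφ
    have hedges := sum_mul_add_one_le_cos_mul_sum_sq N (fun n => ‖φ n‖)
      (by simp [hsupp 0 (by simp)]) (by simp [hsupp (N + 1) (by simp)])
    rw [lp.norm_sq_eq_sum_of_forall_notMem (𝕜 := ℂ) φ _ hφ]
    rw [hcos] at hedges
    linarith
  have hCS : (⟪φ, L φ⟫_ℂ).re ≤ ‖φ‖ * ‖L φ‖ := re_inner_le_norm (𝕜 := ℂ) φ (L φ)
  rw [show 1 / 2 * (sin θ ^ 2)⁻¹ * ‖L φ‖ = ‖L φ‖ / (2 * sin θ ^ 2) by field_simp,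
    le_div_iff₀ (by positivity)]
  rcases (norm_nonneg φ).eq_or_lt with h | h
  · rw [← h]
    simp
  · exact le_of_mul_le_mul_left (by nlinarith) h

/-- If `S = {1, ..., N} ⊂ ℤ` and `φ ∈ ℓ²(ℤ)` is supported in `S`, then
`‖φ‖ ≤ (1/2) sin⁻²(π/(2N+2)) ‖L_ℤ φ‖`, where `L_ℤ` is the normalized Laplacian on `ℤ`. -/
theorem stmt_9 (L : lp (fun _ : ℤ => ℂ) 2 →L[ℂ] lp (fun _ : ℤ => ℂ) 2)
    (hL : ∀ (f : lp (fun _ : ℤ => ℂ) 2) (n : ℤ),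
      L f n = f n - (f (n - 1) + f (n + 1)) / 2)
    (N : ℕ) (hN : 0 < N)
    (φ : lp (fun _ : ℤ => ℂ) 2)
    (hsupp : ∀ n : ℤ, n ∉ Set.Icc (1 : ℤ) (N : ℤ) → φ n = 0) :
    ‖φ‖ ≤ (1 / 2) * ((Real.sin (Real.pi / (2 * N + 2))) ^ 2)⁻¹ * ‖L φ‖ :=
  stmt_9_general L hL N φ hsupp
end

section
/- Let G be a graph with normalized Laplacian L on L²(G), W ⊂ V(G), t > 0, ε ≥ 0 with εI + L positive definite, and let Y be the minimizer of ‖(εI+L)^{t/2} Y‖ subject to Y(w) = y_w for all w ∈ W. Then (εI+L)^t Y = Σ_{w∈W} α_w δ_w for some square-summable coefficients α_w, where δ_w is the indicator function of vertex w. Conversely any function satisfying the interpolation conditions and this equation is the minimizer. -/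
instance lpCLM_instCFCReal {V : Type*} :
    ContinuousFunctionalCalculus ℝ (lp (fun _ : V => ℂ) 2 →L[ℂ] lp (fun _ : V => ℂ) 2)
      IsSelfAdjoint :=
  IsSelfAdjoint.instContinuousFunctionalCalculus

/-!
With `A = (εI + L)^{t/2}` and `K` the functions vanishing on `W`, the admissible functions are
`Y + K`, so minimising `‖A Y‖` means minimising the distance from `A Y` to the subspace `A K`.
Minimisers are characterised by `A Y ⊥ A K`, i.e. by `⟪A² Y, g⟫ = 0` for all `g ∈ K`; testing
with Dirac functions `δ_v`, `v ∉ W`, this says exactly that `A² Y` is supported on `W`. Finally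
`A² = (εI + L)^t` by the functional calculus, since `εI + L ≥ 0` keeps `ε + x ≥ 0` on the spectrum,
where `x ↦ (ε + x)^{t/2}` squares to `(ε + x)^t`.
-/

open scoped InnerProductSpace

section Variational

variable {𝕜 E F : Type*} [RCLike 𝕜] [NormedAddCommGroup E] [InnerProductSpace 𝕜 E]
  [NormedAddCommGroup F] [InnerProductSpace 𝕜 F]

theorem Submodule.forall_norm_le_norm_add_iff_inner_eq_zero (K : Submodule 𝕜 E) (u : E) :
    (∀ w ∈ K, ‖u‖ ≤ ‖u + w‖) ↔ ∀ w ∈ K, ⟪u, w⟫_𝕜 = 0 := by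
  have hbdd : BddBelow (Set.range fun w : K => ‖u - w‖) :=
    ⟨0, by rintro _ ⟨w, rfl⟩; exact norm_nonneg _⟩
  have hmin := K.norm_eq_iInf_iff_inner_eq_zero (u := u) K.zero_mem
  simp only [sub_zero] at hmin
  rw [← hmin]
  constructor
  · intro h
    refine le_antisymm (le_ciInf fun w => ?_) (by simpa using ciInf_le hbdd 0)
    simpa [sub_eq_add_neg] using h (-w) (K.neg_mem w.2)
  · intro h w hw
    simpa [h, sub_eq_add_neg] using ciInf_le hbdd ⟨-w, K.neg_mem hw⟩

theorem Submodule.forall_norm_map_le_map_add_iff (K : Submodule 𝕜 E) (T : E →ₗ[𝕜] F) (u : E) :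
    (∀ g ∈ K, ‖T u‖ ≤ ‖T (u + g)‖) ↔ ∀ g ∈ K, ⟪T u, T g⟫_𝕜 = 0 := by
  have := (K.map T).forall_norm_le_norm_add_iff_inner_eq_zero (T u)
  simpa only [Submodule.mem_map, forall_exists_index, and_imp, forall_apply_eq_imp_iff₂,
    map_add] using this

theorem LinearMap.IsSymmetric.forall_norm_le_norm_add_iff {A : E →ₗ[𝕜] E} (hA : A.IsSymmetric)
    (K : Submodule 𝕜 E) (u : E) :
    (∀ g ∈ K, ‖A u‖ ≤ ‖A (u + g)‖) ↔ ∀ g ∈ K, ⟪A (A u), g⟫_𝕜 = 0 := by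
  simp only [K.forall_norm_map_le_map_add_iff A, hA (A u)]

end Variational

theorem cfc_rpow_half_mul_self {A : Type*} [Ring A] [StarRing A] [Algebra ℝ A]
    [TopologicalSpace A] [ContinuousFunctionalCalculus ℝ A IsSelfAdjoint] (a : A) {ε t : ℝ}
    (ht : 0 < t) (h : ∀ x ∈ spectrum ℝ a, 0 ≤ ε + x) :
    cfc (fun x : ℝ => (ε + x) ^ (t / 2)) a * cfc (fun x : ℝ => (ε + x) ^ (t / 2)) a =
      cfc (fun x : ℝ => (ε + x) ^ t) a := by
  have hcont : Continuous fun x : ℝ => (ε + x) ^ (t / 2) := by fun_prop (disch := positivity)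
  rw [← cfc_mul _ _ a hcont.continuousOn hcont.continuousOn]
  refine cfc_congr fun x hx => ?_
  rw [← Real.rpow_add' (h x hx) (by positivity), add_halves]

theorem ContinuousLinearMap.spectrum_nonneg_of_re_inner_add_nonneg {H : Type*}
    [NormedAddCommGroup H] [InnerProductSpace ℂ H] [CompleteSpace H] {L : H →L[ℂ] H}
    (hL : IsSelfAdjoint L) (ε : ℝ) (h : ∀ f, 0 ≤ (⟪(ε : ℂ) • f + L f, f⟫_ℂ).re) :
    ∀ x ∈ spectrum ℝ L, 0 ≤ ε + x := by
  intro x hx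
  have hM : 0 ≤ algebraMap ℝ (H →L[ℂ] H) ε + L := by
    rw [ContinuousLinearMap.nonneg_iff_isPositive]
    refine ⟨ContinuousLinearMap.isSelfAdjoint_iff_isSymmetric.mp
      ((IsSelfAdjoint.algebraMap _ (.all ε)).add hL), fun f => ?_⟩
    rw [ContinuousLinearMap.reApplyInnerSelf_apply, add_apply, Algebra.algebraMap_eq_smul_one,
      smul_apply, one_apply_eq_self, RCLike.real_smul_eq_coe_smul (K := ℂ)]
    exact h f
  refine spectrum_nonneg_of_nonneg hM ?_
  rw [← spectrum.singleton_add_eq]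
  exact Set.add_mem_add rfl hx

namespace lp

variable {𝕜 V : Type*} [RCLike 𝕜]

def vanishingOn (W : Set V) : Submodule 𝕜 (lp (fun _ : V => 𝕜) 2) where
  carrier := {g | ∀ v ∈ W, g v = 0}
  add_mem' hf hg v hv := by simp [hf v hv, hg v hv]
  zero_mem' _ _ := rfl
  smul_mem' a g hg v hv := by simp [hg v hv]

@[simp]
theorem mem_vanishingOn {W : Set V} {g : lp (fun _ : V => 𝕜) 2} :
    g ∈ vanishingOn W ↔ ∀ v ∈ W, g v = 0 :=
  Iff.rfl

theorem sub_mem_vanishingOn_iff {W : Set V} {f g : lp (fun _ : V => 𝕜) 2} :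
    f - g ∈ vanishingOn W ↔ ∀ w : W, f w = g w := by
  simp [sub_eq_zero]

theorem forall_inner_vanishingOn_eq_zero_iff [DecidableEq V] (W : Set V)
    (f : lp (fun _ : V => 𝕜) 2) :
    (∀ g ∈ vanishingOn W, ⟪f, g⟫_𝕜 = 0) ↔ ∀ v ∉ W, f v = 0 := by
  constructor
  · intro h v hv
    have hsingle : lp.single 2 v (1 : 𝕜) ∈ vanishingOn W := fun w hw =>
      lp.single_apply_ne 2 v _ (by rintro rfl; exact hv hw)
    simpa [lp.inner_single_right] using h _ hsingle
  · intro h g hg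
    rw [lp.inner_eq_tsum]
    refine (tsum_congr fun v => ?_).trans tsum_zero
    by_cases hv : v ∈ W
    · simp [hg v hv]
    · simp [h v hv]

theorem tsum_mul_ite_eq_of_mem [DecidableEq V] {W : Set V} (α : W → 𝕜) {v : V} (hv : v ∈ W) :
    ∑' w : W, α w * (if v = (w : V) then 1 else 0) = α ⟨v, hv⟩ := by
  refine (tsum_eq_single ⟨v, hv⟩ fun w hw => ?_).trans (by simp)
  simp [show v ≠ w from fun h => hw (Subtype.ext h.symm)]

theorem tsum_mul_ite_eq_zero_of_notMem [DecidableEq V] {W : Set V} (α : W → 𝕜) {v : V}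
    (hv : v ∉ W) : ∑' w : W, α w * (if v = (w : V) then 1 else 0) = 0 := by
  refine (tsum_congr fun w => ?_).trans tsum_zero
  simp [show v ≠ w from fun h => hv (h ▸ w.2)]

theorem exists_memℓp_eq_tsum_ite_iff [DecidableEq V] (W : Set V) (f : lp (fun _ : V => 𝕜) 2) :
    (∃ α : W → 𝕜, Memℓp α 2 ∧ ∀ v : V, f v = ∑' w : W, α w * (if v = (w : V) then 1 else 0)) ↔
      ∀ v ∉ W, f v = 0 := by
  constructor
  · rintro ⟨α, -, hα⟩ v hv
    rw [hα v, tsum_mul_ite_eq_zero_of_notMem α hv]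
  · intro h
    refine ⟨fun w => f w, memℓp_gen (((lp.memℓp f).summable (by norm_num)).subtype _), fun v => ?_⟩
    by_cases hv : v ∈ W
    · rw [tsum_mul_ite_eq_of_mem _ hv]
    · rw [tsum_mul_ite_eq_zero_of_notMem _ hv, h v hv]

theorem forall_norm_le_iff_mul_self_eq_zero_off [DecidableEq V]
    {A : lp (fun _ : V => 𝕜) 2 →L[𝕜] lp (fun _ : V => 𝕜) 2} (hA : IsSelfAdjoint A) (W : Set V)
    (Z : lp (fun _ : V => 𝕜) 2) :
    (∀ Z' : lp (fun _ : V => 𝕜) 2, (∀ w : W, Z' w = Z w) → ‖A Z‖ ≤ ‖A Z'‖) ↔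
      ∀ v ∉ W, (A * A) Z v = 0 := by
  have hvar := hA.isSymmetric.forall_norm_le_norm_add_iff (vanishingOn W) Z
  simp only [ContinuousLinearMap.coe_coe] at hvar
  rw [← forall_inner_vanishingOn_eq_zero_iff, mul_apply_eq_comp, ← hvar]
  constructor
  · intro h g hg
    exact h _ fun w => by simp [hg w w.2]
  · intro h Z' hZ'
    simpa using h (Z' - Z) (sub_mem_vanishingOn_iff.mpr hZ')

end lp

theorem stmt_15_general {V : Type*} [DecidableEq V]
    (L : lp (fun _ : V => ℂ) 2 →L[ℂ] lp (fun _ : V => ℂ) 2) (hsa : IsSelfAdjoint L)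
    (W : Set V) (y : W → ℂ)
    (t ε : ℝ) (ht : 0 < t)
    (c : ℝ) (hc : 0 < c)
    (hpos : ∀ f : lp (fun _ : V => ℂ) 2,
      c * ‖f‖ ^ 2 ≤ (inner ℂ ((ε : ℂ) • f + L f) f : ℂ).re)
    (Y : lp (fun _ : V => ℂ) 2) (hint : ∀ w : W, Y (w : V) = y w)
    (hmin : ∀ Z : lp (fun _ : V => ℂ) 2, (∀ w : W, Z (w : V) = y w) →
      ‖cfc (fun x : ℝ => (ε + x) ^ (t / 2)) L Y‖ ≤
        ‖cfc (fun x : ℝ => (ε + x) ^ (t / 2)) L Z‖) :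
    (∃ α : W → ℂ, Memℓp α 2 ∧ ∀ v : V,
        cfc (fun x : ℝ => (ε + x) ^ t) L Y v =
          ∑' w : W, α w * (if v = (w : V) then 1 else 0)) ∧
    ∀ Z : lp (fun _ : V => ℂ) 2, (∀ w : W, Z (w : V) = y w) →
      (∃ α : W → ℂ, Memℓp α 2 ∧ ∀ v : V,
        cfc (fun x : ℝ => (ε + x) ^ t) L Z v =
          ∑' w : W, α w * (if v = (w : V) then 1 else 0)) →
      ∀ Z' : lp (fun _ : V => ℂ) 2, (∀ w : W, Z' (w : V) = y w) →
        ‖cfc (fun x : ℝ => (ε + x) ^ (t / 2)) L Z‖ ≤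
          ‖cfc (fun x : ℝ => (ε + x) ^ (t / 2)) L Z'‖ := by
  set A := cfc (fun x : ℝ => (ε + x) ^ (t / 2)) L
  set Lt := cfc (fun x : ℝ => (ε + x) ^ t) L
  have hspec := L.spectrum_nonneg_of_re_inner_add_nonneg hsa ε fun f =>
    (by positivity : 0 ≤ c * ‖f‖ ^ 2).trans (hpos f)
  have hsq : A * A = Lt := cfc_rpow_half_mul_self L ht hspec
  have hA : IsSelfAdjoint A := cfc_predicate _ L
  have key : ∀ Z : lp (fun _ : V => ℂ) 2, (∀ w : W, Z (w : V) = y w) →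
      ((∀ Z' : lp (fun _ : V => ℂ) 2, (∀ w : W, Z' (w : V) = y w) → ‖A Z‖ ≤ ‖A Z'‖) ↔
        ∃ α : W → ℂ, Memℓp α 2 ∧
          ∀ v : V, Lt Z v = ∑' w : W, α w * (if v = (w : V) then 1 else 0)) := by
    intro Z hZ
    rw [lp.exists_memℓp_eq_tsum_ite_iff, ← hsq, ← lp.forall_norm_le_iff_mul_self_eq_zero_off hA]
    simp only [hZ]
  exact ⟨(key Y hint).1 hmin, fun Z hZ hα => (key Z hZ).2 hα⟩

/-- Let `G` be a connected simple graph with bounded degrees and normalized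
Laplacian `L` on `ℓ²(V)`. Let `W ⊂ V`, `y ∈ ℓ²(W)`, `t > 0`, `ε ≥ 0` with `εI + L`
positive definite, and let `Y` minimize `‖(εI+L)^{t/2} Y‖` subject to `Y(w) = y_w`, `w ∈ W`.
Then `(εI+L)^t Y = Σ_{w∈W} α_w δ_w` for some `{α_w} ∈ ℓ²(W)`; conversely any function
satisfying the interpolation conditions and an equation of this form is the minimizer. -/
theorem stmt_15 {V : Type*} [DecidableEq V] (G : SimpleGraph V) [∀ v, Fintype (G.neighborSet v)]
    (hconn : G.Connected) (D : ℕ) (hD : ∀ v, G.degree v ≤ D)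
    (L : lp (fun _ : V => ℂ) 2 →L[ℂ] lp (fun _ : V => ℂ) 2) (hsa : IsSelfAdjoint L)
    (hL : ∀ (f : lp (fun _ : V => ℂ) 2) (v : V),
      L f v = (1 / (Real.sqrt (G.degree v) : ℂ)) *
        ∑ u ∈ G.neighborFinset v,
          (f v / (Real.sqrt (G.degree v) : ℂ) - f u / (Real.sqrt (G.degree u) : ℂ)))
    (W : Set V) (y : W → ℂ) (hy : Memℓp y 2)
    (t ε : ℝ) (ht : 0 < t) (hε : 0 ≤ ε)
    (c : ℝ) (hc : 0 < c)
    (hpos : ∀ f : lp (fun _ : V => ℂ) 2,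
      c * ‖f‖ ^ 2 ≤ (inner ℂ ((ε : ℂ) • f + L f) f : ℂ).re)
    (Y : lp (fun _ : V => ℂ) 2) (hint : ∀ w : W, Y (w : V) = y w)
    (hmin : ∀ Z : lp (fun _ : V => ℂ) 2, (∀ w : W, Z (w : V) = y w) →
      ‖cfc (fun x : ℝ => (ε + x) ^ (t / 2)) L Y‖ ≤
        ‖cfc (fun x : ℝ => (ε + x) ^ (t / 2)) L Z‖) :
    (∃ α : W → ℂ, Memℓp α 2 ∧ ∀ v : V,
        cfc (fun x : ℝ => (ε + x) ^ t) L Y v =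
          ∑' w : W, α w * (if v = (w : V) then 1 else 0)) ∧
    ∀ Z : lp (fun _ : V => ℂ) 2, (∀ w : W, Z (w : V) = y w) →
      (∃ α : W → ℂ, Memℓp α 2 ∧ ∀ v : V,
        cfc (fun x : ℝ => (ε + x) ^ t) L Z v =
          ∑' w : W, α w * (if v = (w : V) then 1 else 0)) →
      ∀ Z' : lp (fun _ : V => ℂ) 2, (∀ w : W, Z' (w : V) = y w) →
        ‖cfc (fun x : ℝ => (ε + x) ^ (t / 2)) L Z‖ ≤
          ‖cfc (fun x : ℝ => (ε + x) ^ (t / 2)) L Z'‖ :=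
  stmt_15_general L hsa W y t ε ht c hc hpos Y hint hmin
end

section
/- Let L be a bounded self-adjoint positive semidefinite operator on a Hilbert space H, S a closed subspace with ‖φ‖ ≤ Λ‖Lφ‖ for all φ ∈ S, and fix 0 < ε < 1/Λ and 0 ≤ ω < 1/Λ − ε. Suppose f ∈ H satisfies ‖L^m f‖ ≤ ω^m‖f‖ for all m ∈ ℕ. For k = 2^l, let Y_k be any element with f − Y_k ∈ S and ‖(εI+L)^k Y_k‖ ≤ ‖(εI+L)^k f‖. Then ‖f − Y_k‖ ≤ 2(Λ(ω+ε))^k‖f‖. -/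
open scoped InnerProductSpace
open Finset

/-- Let `L` be a bounded self-adjoint positive semidefinite operator on a
complex Hilbert space, `S` a closed subspace with `‖φ‖ ≤ Λ‖Lφ‖` for `φ ∈ S`, and fix
`0 < ε < 1/Λ` and `0 ≤ ω < 1/Λ - ε`. Suppose `‖L^m f‖ ≤ ω^m ‖f‖` for all `m ∈ ℕ`.
For `k = 2^l`, let `Y l` satisfy `f - Y l ∈ S` and `‖(εI+L)^k (Y l)‖ ≤ ‖(εI+L)^k f‖`.
Then `‖f - Y l‖ ≤ 2 (Λ(ω+ε))^k ‖f‖`. -/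
theorem stmt_18 {H : Type*} [NormedAddCommGroup H] [InnerProductSpace ℂ H] [CompleteSpace H]
    (L : H →L[ℂ] H) (hL : L.IsPositive)
    (S : Submodule ℂ H) (hS : IsClosed (S : Set H))
    (Λ : ℝ) (hΛ : 0 < Λ) (hPoin : ∀ φ ∈ S, ‖φ‖ ≤ Λ * ‖L φ‖)
    (ε : ℝ) (hε : 0 < ε) (hεΛ : ε < 1 / Λ)
    (ω : ℝ) (hω : 0 ≤ ω) (hωΛ : ω < 1 / Λ - ε)
    (f : H) (hf : ∀ m : ℕ, ‖(L ^ m) f‖ ≤ ω ^ m * ‖f‖)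
    (Y : ℕ → H) (hYS : ∀ l : ℕ, f - Y l ∈ S)
    (hYmin : ∀ l : ℕ,
      ‖(((ε : ℂ) • (1 : H →L[ℂ] H) + L) ^ (2 ^ l)) (Y l)‖ ≤
        ‖(((ε : ℂ) • (1 : H →L[ℂ] H) + L) ^ (2 ^ l)) f‖) :
    ∀ l : ℕ, ‖f - Y l‖ ≤ 2 * (Λ * (ω + ε)) ^ (2 ^ l) * ‖f‖ := by
  set A : H →L[ℂ] H := (ε : ℂ) • (1 : H →L[ℂ] H) + L with hAdef
  -- A is self-adjoint
  have hAsa : IsSelfAdjoint A := by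
    refine IsSelfAdjoint.add ?_ hL.isSelfAdjoint
    simp [IsSelfAdjoint, star_smul, Complex.star_def, Complex.conj_ofReal]
  -- ‖L φ‖ ≤ ‖A φ‖
  have hLA : ∀ φ : H, ‖L φ‖ ≤ ‖A φ‖ := by
    intro φ
    have happ : A φ = (ε : ℂ) • φ + L φ := by simp [hAdef]
    have hsq : ‖(ε : ℂ) • φ + L φ‖ ^ 2 =
        ‖(ε : ℂ) • φ‖ ^ 2 + 2 * Complex.re ⟪(ε : ℂ) • φ, L φ⟫_ℂ + ‖L φ‖ ^ 2 :=
      norm_add_sq (𝕜 := ℂ) _ _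
    have hre : 0 ≤ Complex.re ⟪(ε : ℂ) • φ, L φ⟫_ℂ := by
      have h0 := hL.2 φ
      rw [ContinuousLinearMap.reApplyInnerSelf] at h0
      have h1 : Complex.re ⟪(ε : ℂ) • φ, L φ⟫_ℂ = ε * Complex.re ⟪L φ, φ⟫_ℂ := by
        rw [inner_smul_left, Complex.conj_ofReal, Complex.re_ofReal_mul,
          ← inner_conj_symm, Complex.conj_re]
      rw [h1]
      positivity
    nlinarith [norm_nonneg (A φ), norm_nonneg (L φ),
      sq_nonneg ‖(ε : ℂ) • φ‖, happ ▸ hsq]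
  -- doubling inequality
  have hdouble : ∀ (m : ℕ) (ψ : H), ‖(A ^ m) ψ‖ ^ 2 ≤ ‖(A ^ (2 * m)) ψ‖ * ‖ψ‖ := by
    intro m ψ
    have hsa : IsSelfAdjoint (A ^ m) := hAsa.pow m
    have hsym := (ContinuousLinearMap.isSelfAdjoint_iff_isSymmetric.mp hsa)
    have h1 : (⟪(A ^ (2 * m)) ψ, ψ⟫_ℂ) = ⟪(A ^ m) ψ, (A ^ m) ψ⟫_ℂ := by
      have h2 : A ^ (2 * m) = (A ^ m) * (A ^ m) := by rw [two_mul, pow_add]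
      rw [h2, ContinuousLinearMap.mul_apply]
      exact hsym ((A ^ m) ψ) ψ
    have h3 : (‖(A ^ m) ψ‖ : ℝ) ^ 2 = ‖⟪(A ^ (2 * m)) ψ, ψ⟫_ℂ‖ := by
      rw [h1, inner_self_eq_norm_sq_to_K]; simp [sq_abs]
    rw [h3]
    exact norm_inner_le_norm _ _
  -- iterated inequality
  have hiter : ∀ (j : ℕ) (ψ : H),
      ‖A ψ‖ ^ (2 ^ j) ≤ ‖(A ^ (2 ^ j)) ψ‖ * ‖ψ‖ ^ (2 ^ j - 1) := by
    intro j
    induction j with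
    | zero => intro ψ; simp
    | succ j ih =>
      intro ψ
      have h2j : 1 ≤ 2 ^ j := Nat.one_le_two_pow
      have e1 : (2 : ℕ) ^ (j + 1) = 2 * 2 ^ j := by ring
      have e2 : (2 ^ j - 1) * 2 + 1 = 2 ^ (j + 1) - 1 := by omega
      calc ‖A ψ‖ ^ 2 ^ (j + 1) = (‖A ψ‖ ^ 2 ^ j) ^ 2 := by
            rw [← pow_mul, pow_succ]
        _ ≤ (‖(A ^ (2 ^ j)) ψ‖ * ‖ψ‖ ^ (2 ^ j - 1)) ^ 2 := by
            apply pow_le_pow_left₀ (by positivity) (ih ψ)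
        _ = ‖(A ^ (2 ^ j)) ψ‖ ^ 2 * ‖ψ‖ ^ ((2 ^ j - 1) * 2) := by
            rw [mul_pow, pow_mul]
        _ ≤ (‖(A ^ (2 * 2 ^ j)) ψ‖ * ‖ψ‖) * ‖ψ‖ ^ ((2 ^ j - 1) * 2) := by
            apply mul_le_mul_of_nonneg_right (hdouble (2 ^ j) ψ) (by positivity)
        _ = ‖(A ^ (2 ^ (j + 1))) ψ‖ * ‖ψ‖ ^ ((2 ^ j - 1) * 2 + 1) := by
            rw [← e1]; ring
        _ = ‖(A ^ (2 ^ (j + 1))) ψ‖ * ‖ψ‖ ^ (2 ^ (j + 1) - 1) := by rw [e2]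
  -- iterated Poincaré on S
  have hPoinPow : ∀ (j : ℕ), ∀ φ ∈ S, ‖φ‖ ≤ Λ ^ (2 ^ j) * ‖(A ^ (2 ^ j)) φ‖ := by
    intro j φ hφ
    by_cases hφ0 : φ = 0
    · simp [hφ0]
    have hc : 0 < ‖φ‖ := norm_pos_iff.mpr hφ0
    have h1 : ‖φ‖ ≤ Λ * ‖A φ‖ :=
      (hPoin φ hφ).trans (mul_le_mul_of_nonneg_left (hLA φ) hΛ.le)
    have h2 : ‖φ‖ ^ (2 ^ j) ≤ (Λ * ‖A φ‖) ^ (2 ^ j) :=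
      pow_le_pow_left₀ (norm_nonneg φ) h1 _
    have h3 : (Λ * ‖A φ‖) ^ (2 ^ j) ≤
        Λ ^ (2 ^ j) * (‖(A ^ (2 ^ j)) φ‖ * ‖φ‖ ^ (2 ^ j - 1)) := by
      rw [mul_pow]
      exact mul_le_mul_of_nonneg_left (hiter j φ) (by positivity)
    have h2j : 1 ≤ 2 ^ j := Nat.one_le_two_pow
    have hsplit : ‖φ‖ ^ (2 ^ j) = ‖φ‖ * ‖φ‖ ^ (2 ^ j - 1) := by
      rw [← pow_succ']; congr 1; omega
    have h4 : ‖φ‖ * ‖φ‖ ^ (2 ^ j - 1) ≤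
        (Λ ^ (2 ^ j) * ‖(A ^ (2 ^ j)) φ‖) * ‖φ‖ ^ (2 ^ j - 1) := by
      rw [← hsplit]
      calc ‖φ‖ ^ (2 ^ j) ≤ Λ ^ (2 ^ j) * (‖(A ^ (2 ^ j)) φ‖ * ‖φ‖ ^ (2 ^ j - 1)) :=
            h2.trans h3
        _ = (Λ ^ (2 ^ j) * ‖(A ^ (2 ^ j)) φ‖) * ‖φ‖ ^ (2 ^ j - 1) := by ring
    exact le_of_mul_le_mul_right (by linarith [h4]) (by positivity)
  -- Bernstein
  have hBern : ∀ k : ℕ, ‖(A ^ k) f‖ ≤ (ω + ε) ^ k * ‖f‖ := by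
    intro k
    have hc : Commute ((ε : ℂ) • (1 : H →L[ℂ] H)) L := by
      unfold Commute SemiconjBy
      simp [smul_mul_assoc, mul_smul_comm]
    rw [hAdef, hc.add_pow, ContinuousLinearMap.sum_apply]
    refine le_trans (norm_sum_le _ _) ?_
    have hterm : ∀ i ∈ range (k + 1),
        ‖((((ε : ℂ) • (1 : H →L[ℂ] H)) ^ i * L ^ (k - i) * (k.choose i : H →L[ℂ] H))) f‖
          ≤ ε ^ i * ω ^ (k - i) * (k.choose i : ℝ) * ‖f‖ := by
      intro i _
      have h1 : (((ε : ℂ) • (1 : H →L[ℂ] H)) ^ i * L ^ (k - i) * (k.choose i : H →L[ℂ] H)) f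
          = ((ε : ℂ) ^ i * (k.choose i : ℂ)) • ((L ^ (k - i)) f) := by
        simp only [ContinuousLinearMap.mul_apply, smul_pow, one_pow,
          ContinuousLinearMap.smul_apply, ContinuousLinearMap.one_apply, mul_smul,
          ContinuousLinearMap.natCast_apply, map_nsmul]
        rw [Nat.cast_smul_eq_nsmul, smul_comm]
      rw [h1, norm_smul]
      have h2 : ‖(ε : ℂ) ^ i * (k.choose i : ℂ)‖ = ε ^ i * (k.choose i : ℝ) := by
        simp [norm_pow, abs_of_nonneg hε.le]
      rw [h2]
      calc ε ^ i * (k.choose i : ℝ) * ‖(L ^ (k - i)) f‖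
          ≤ ε ^ i * (k.choose i : ℝ) * (ω ^ (k - i) * ‖f‖) := by
            apply mul_le_mul_of_nonneg_left (hf _); positivity
        _ = ε ^ i * ω ^ (k - i) * (k.choose i : ℝ) * ‖f‖ := by ring
    refine le_trans (Finset.sum_le_sum hterm) ?_
    rw [← Finset.sum_mul]
    apply mul_le_mul_of_nonneg_right _ (norm_nonneg f)
    rw [add_comm ω ε, add_pow]
  -- assemble
  intro l
  have hφS := hYS l
  have step1 : ‖f - Y l‖ ≤ Λ ^ (2 ^ l) * ‖(A ^ (2 ^ l)) (f - Y l)‖ :=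
    hPoinPow l _ hφS
  have step2 : ‖(A ^ (2 ^ l)) (f - Y l)‖ ≤ 2 * ‖(A ^ (2 ^ l)) f‖ := by
    have : (A ^ (2 ^ l)) (f - Y l) = (A ^ (2 ^ l)) f - (A ^ (2 ^ l)) (Y l) := map_sub _ _ _
    rw [this]
    calc ‖(A ^ (2 ^ l)) f - (A ^ (2 ^ l)) (Y l)‖
        ≤ ‖(A ^ (2 ^ l)) f‖ + ‖(A ^ (2 ^ l)) (Y l)‖ := norm_sub_le _ _
      _ ≤ ‖(A ^ (2 ^ l)) f‖ + ‖(A ^ (2 ^ l)) f‖ := by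
          linarith [hYmin l]
      _ = 2 * ‖(A ^ (2 ^ l)) f‖ := by ring
  calc ‖f - Y l‖ ≤ Λ ^ (2 ^ l) * ‖(A ^ (2 ^ l)) (f - Y l)‖ := step1
    _ ≤ Λ ^ (2 ^ l) * (2 * ‖(A ^ (2 ^ l)) f‖) := by
        apply mul_le_mul_of_nonneg_left step2 (by positivity)
    _ ≤ Λ ^ (2 ^ l) * (2 * ((ω + ε) ^ (2 ^ l) * ‖f‖)) := by
        apply mul_le_mul_of_nonneg_left _ (by positivity)
        apply mul_le_mul_of_nonneg_left (hBern _) (by norm_num)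
    _ = 2 * (Λ * (ω + ε)) ^ (2 ^ l) * ‖f‖ := by rw [mul_pow]; ring
end
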